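/- arXiv:2003.05728 — 4 statements merged into one kernel-verified Lean document; each statement's English description precedes it below -/
import Mathlib

section
/- Let T_a(λ) = -C V (U^T A_0 V + Σ_{i=1}^m U^T A_i V e^{-λτ_i})^{-1} U^T B be the asymptotic transfer function of a delay differential algebraic system, with all delays τ_i > 0. Then the supremum over ω ∈ ℝ of the largest singular value of T_a(jω), taken robustly over arbitrarily small perturbations of the delay vector, equals max over θ ∈ [0,2π]^m of the largest singular value of 𝕋_a(θ) := C V (-U^T A_0 V - Σ_{i=1}^m U^T A_i V e^{-jθ_i})^{-1} U^T B. -/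
open scoped Matrix.Norms.L2Operator ENNReal NNReal
open Matrix Filter Topology Set

noncomputable section

variable {n m p q v a b : ℕ}

/-- entrywise coercion of a real matrix to a complex matrix -/
def cmx (A : Matrix (Fin a) (Fin b) ℝ) : Matrix (Fin a) (Fin b) ℂ :=
  A.map fun x => (x : ℂ)

/-- the characteristic matrix  λE - A₀ - ∑ᵢ Aᵢ e^{-λτᵢ}  of the DDAE -/
def charM (E A0 : Matrix (Fin n) (Fin n) ℝ) (A : Fin m → Matrix (Fin n) (Fin n) ℝ)
    (τ : Fin m → ℝ) (lam : ℂ) : Matrix (Fin n) (Fin n) ℂ :=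
  lam • cmx E - cmx A0 - ∑ i, Complex.exp (-(lam * (τ i : ℂ))) • cmx (A i)

/-- the transfer function  T(jω) = C (jωE - A₀ - ∑ Aᵢe^{-jωτᵢ})⁻¹ B -/
def Tf (E A0 : Matrix (Fin n) (Fin n) ℝ) (A : Fin m → Matrix (Fin n) (Fin n) ℝ)
    (B : Matrix (Fin n) (Fin p) ℝ) (C : Matrix (Fin q) (Fin n) ℝ)
    (τ : Fin m → ℝ) (ω : ℝ) : Matrix (Fin q) (Fin p) ℂ :=
  cmx C * (charM E A0 A τ (Complex.I * (ω : ℂ)))⁻¹ * cmx B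

/-- the delay-difference matrix  UᵀA₀V + ∑ UᵀAᵢV e^{-jωτᵢ} -/
def M0tau (U V : Matrix (Fin n) (Fin v) ℝ) (A0 : Matrix (Fin n) (Fin n) ℝ)
    (A : Fin m → Matrix (Fin n) (Fin n) ℝ) (τ : Fin m → ℝ) (ω : ℝ) :
    Matrix (Fin v) (Fin v) ℂ :=
  (cmx U)ᵀ * cmx A0 * cmx V +
    ∑ i, Complex.exp (-(Complex.I * (ω : ℂ) * (τ i : ℂ))) • ((cmx U)ᵀ * cmx (A i) * cmx V)

/-- the asymptotic transfer function  T_a(jω) -/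
def Taf (U V : Matrix (Fin n) (Fin v) ℝ) (A0 : Matrix (Fin n) (Fin n) ℝ)
    (A : Fin m → Matrix (Fin n) (Fin n) ℝ) (B : Matrix (Fin n) (Fin p) ℝ)
    (C : Matrix (Fin q) (Fin n) ℝ) (τ : Fin m → ℝ) (ω : ℝ) : Matrix (Fin q) (Fin p) ℂ :=
  -(cmx C * cmx V * (M0tau U V A0 A τ ω)⁻¹ * ((cmx U)ᵀ * cmx B))

/-- 𝔸₂₂(θ) = -UᵀA₀V - ∑ UᵀAᵢV e^{-jθᵢ} -/
def AA22 (U V : Matrix (Fin n) (Fin v) ℝ) (A0 : Matrix (Fin n) (Fin n) ℝ)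
    (A : Fin m → Matrix (Fin n) (Fin n) ℝ) (θ : Fin m → ℝ) : Matrix (Fin v) (Fin v) ℂ :=
  -((cmx U)ᵀ * cmx A0 * cmx V) -
    ∑ i, Complex.exp (-(Complex.I * (θ i : ℂ))) • ((cmx U)ᵀ * cmx (A i) * cmx V)

/-- 𝕋_a(θ) = CV 𝔸₂₂(θ)⁻¹ UᵀB -/
def TTa (U V : Matrix (Fin n) (Fin v) ℝ) (A0 : Matrix (Fin n) (Fin n) ℝ)
    (A : Fin m → Matrix (Fin n) (Fin n) ℝ) (B : Matrix (Fin n) (Fin p) ℝ)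
    (C : Matrix (Fin q) (Fin n) ℝ) (θ : Fin m → ℝ) : Matrix (Fin q) (Fin p) ℂ :=
  cmx C * cmx V * (AA22 U V A0 A θ)⁻¹ * ((cmx U)ᵀ * cmx B)

/-- the H∞ norm, ⨆_ω of the largest singular value (= L2 operator norm),
in the extended nonnegative reals -/
def Hinf (G : ℝ → Matrix (Fin a) (Fin b) ℂ) : ℝ≥0∞ :=
  ⨆ ω : ℝ, (‖G ω‖₊ : ℝ≥0∞)

/-- the strong H∞ norm at delay vector τ: the limit (= infimum, by monotonicity)
as ε → 0+ of the supremum of the H∞ norm over B(τ, ε) ∩ (ℝ⁺)^m -/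
def strongHinf (G : (Fin m → ℝ) → ℝ → Matrix (Fin a) (Fin b) ℂ) (τ : Fin m → ℝ) : ℝ≥0∞ :=
  ⨅ (ε : ℝ) (_ : 0 < ε),
    ⨆ (τ' : Fin m → ℝ) (_ : dist τ' τ < ε ∧ ∀ i, 0 ≤ τ' i), Hinf (G τ')

/-- ξ is a singular value of M iff ξ ≥ 0 and ξ² is an eigenvalue of MᴴM -/
def IsSingularValue (ξ : ℝ) (M : Matrix (Fin a) (Fin b) ℂ) : Prop :=
  0 ≤ ξ ∧ ∃ x : Fin b → ℂ, x ≠ 0 ∧ (Mᴴ * M) *ᵥ x = ((ξ ^ 2 : ℝ) : ℂ) • x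

/-- strong exponential stability of the zero solution of the DDAE:
the characteristic matrix is invertible in the closed right half plane, robustly
with respect to small delay perturbations, and the associated delay difference
equation is strongly stable (the matrix 𝔸₂₂(θ) is invertible on the whole torus) -/
def StrongStable (E A0 : Matrix (Fin n) (Fin n) ℝ) (A : Fin m → Matrix (Fin n) (Fin n) ℝ)
    (U V : Matrix (Fin n) (Fin v) ℝ) (τ : Fin m → ℝ) : Prop :=
  (∃ ε > (0 : ℝ), ∀ τ' : Fin m → ℝ, dist τ' τ < ε → (∀ i, 0 ≤ τ' i) →
      ∀ lam : ℂ, 0 ≤ lam.re → IsUnit (charM E A0 A τ' lam)) ∧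
  ∀ θ : Fin m → ℝ, IsUnit (AA22 U V A0 A θ)

lemma matrix_inv_neg {k : ℕ} (M : Matrix (Fin k) (Fin k) ℂ) : (-M)⁻¹ = -(M⁻¹) := by
  by_cases h : IsUnit M.det
  · have hM : -M = (-1 : ℂˣ) • M := by
      ext i j
      simp [Units.smul_def]
    rw [hM, Matrix.inv_smul' _ _ h]
    ext i j
    simp [Units.smul_def]
  · have h2 : ¬ IsUnit (-M).det := by
      rw [Matrix.det_neg]
      intro hu
      exact h ((IsUnit.mul_iff.mp hu).2)
    rw [Matrix.nonsing_inv_apply_not_isUnit _ h2, Matrix.nonsing_inv_apply_not_isUnit _ h,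
      neg_zero]

lemma M0tau_eq_neg_AA22 (U V : Matrix (Fin n) (Fin v) ℝ) (A0 : Matrix (Fin n) (Fin n) ℝ)
    (A : Fin m → Matrix (Fin n) (Fin n) ℝ) (τ' : Fin m → ℝ) (ω : ℝ) :
    M0tau U V A0 A τ' ω = -(AA22 U V A0 A (fun i => ω * τ' i)) := by
  unfold M0tau AA22
  rw [neg_sub, sub_neg_eq_add, add_comm]
  congr 1
  refine Finset.sum_congr rfl fun i _ => ?_
  congr 2
  push_cast
  ring

lemma Taf_eq_TTa (U V : Matrix (Fin n) (Fin v) ℝ) (A0 : Matrix (Fin n) (Fin n) ℝ)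
    (A : Fin m → Matrix (Fin n) (Fin n) ℝ) (B : Matrix (Fin n) (Fin p) ℝ)
    (C : Matrix (Fin q) (Fin n) ℝ) (τ' : Fin m → ℝ) (ω : ℝ) :
    Taf U V A0 A B C τ' ω = TTa U V A0 A B C (fun i => ω * τ' i) := by
  unfold Taf TTa
  rw [M0tau_eq_neg_AA22, matrix_inv_neg, Matrix.mul_neg, Matrix.neg_mul, neg_neg]

lemma exp_periodic (x : ℝ) (k : ℤ) :
    Complex.exp (-(Complex.I * ((x + 2 * Real.pi * k : ℝ) : ℂ))) =
      Complex.exp (-(Complex.I * (x : ℂ))) := by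
  have h : (-(Complex.I * ((x + 2 * Real.pi * k : ℝ) : ℂ))) =
      -(Complex.I * (x : ℂ)) + (-k : ℤ) * (2 * (Real.pi : ℂ) * Complex.I) := by
    push_cast
    ring
  rw [h, Complex.exp_add, Complex.exp_int_mul_two_pi_mul_I, mul_one]

lemma TTa_periodic (U V : Matrix (Fin n) (Fin v) ℝ) (A0 : Matrix (Fin n) (Fin n) ℝ)
    (A : Fin m → Matrix (Fin n) (Fin n) ℝ) (B : Matrix (Fin n) (Fin p) ℝ)
    (C : Matrix (Fin q) (Fin n) ℝ) (θ : Fin m → ℝ) (k : Fin m → ℤ) :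
    TTa U V A0 A B C (fun i => θ i + 2 * Real.pi * k i) = TTa U V A0 A B C θ := by
  have hsum : (∑ i, Complex.exp (-(Complex.I * ((θ i + 2 * Real.pi * k i : ℝ) : ℂ))) •
      ((cmx U)ᵀ * cmx (A i) * cmx V)) =
      ∑ i, Complex.exp (-(Complex.I * ((θ i : ℝ) : ℂ))) • ((cmx U)ᵀ * cmx (A i) * cmx V) :=
    Finset.sum_congr rfl fun i _ => by rw [exp_periodic]
  unfold TTa AA22
  rw [hsum]

lemma round_bound (x : ℝ) :
    |2 * Real.pi * ((round (x / (2 * Real.pi)) : ℤ) : ℝ) - x| ≤ Real.pi := by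
  have h2pi : (0:ℝ) < 2 * Real.pi := by positivity
  have h := abs_sub_round (x / (2 * Real.pi))
  have hx : 2 * Real.pi * (x / (2 * Real.pi)) = x := by field_simp
  have heq : 2 * Real.pi * ((round (x / (2 * Real.pi)) : ℤ) : ℝ) - x
      = 2 * Real.pi * (((round (x / (2 * Real.pi)) : ℤ) : ℝ) - x / (2 * Real.pi)) := by
    rw [mul_sub, hx]
  rw [heq, abs_mul, abs_of_pos h2pi, abs_sub_comm]
  nlinarith [Real.pi_pos]

theorem strong_Hinf_Ta_eq_max_over_torus {n m p q v : ℕ}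
    (E A0 : Matrix (Fin n) (Fin n) ℝ) (A : Fin m → Matrix (Fin n) (Fin n) ℝ)
    (B : Matrix (Fin n) (Fin p) ℝ) (C : Matrix (Fin q) (Fin n) ℝ)
    (U V : Matrix (Fin n) (Fin v) ℝ) (τ : Fin m → ℝ)
    (hrank : E.rank = n - v) (hUrank : U.rank = v) (hVrank : V.rank = v)
    (hUE : Uᵀ * E = 0) (hEV : E * V = 0)
    (hA0 : IsUnit (Uᵀ * A0 * V))
    (hstab : StrongStable E A0 A U V τ)
    (hτ : ∀ i, 0 < τ i) :
    strongHinf (fun τ' ω => Taf U V A0 A B C τ' ω) τ =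
      ⨆ (θ : Fin m → ℝ) (_ : ∀ i, θ i ∈ Set.Icc (0 : ℝ) (2 * Real.pi)),
        (‖TTa U V A0 A B C θ‖₊ : ℝ≥0∞) := by
  classical
  have hpi : (0:ℝ) < 2 * Real.pi := by positivity
  -- every value of TTa is dominated by the sup over the torus [0, 2π]^m
  have key : ∀ θ : Fin m → ℝ, (‖TTa U V A0 A B C θ‖₊ : ℝ≥0∞) ≤
      ⨆ (θ' : Fin m → ℝ) (_ : ∀ i, θ' i ∈ Set.Icc (0:ℝ) (2*Real.pi)),
        (‖TTa U V A0 A B C θ'‖₊ : ℝ≥0∞) := by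
    intro θ
    have hmem : ∀ i, 2 * Real.pi * Int.fract (θ i / (2 * Real.pi)) ∈
        Set.Icc (0:ℝ) (2 * Real.pi) := by
      intro i
      refine ⟨mul_nonneg hpi.le (Int.fract_nonneg _), ?_⟩
      nlinarith [Int.fract_nonneg (θ i / (2 * Real.pi)),
        (Int.fract_lt_one (θ i / (2 * Real.pi))).le]
    have hfun : (fun i => 2 * Real.pi * Int.fract (θ i / (2 * Real.pi)) +
        2 * Real.pi * ((⌊θ i / (2 * Real.pi)⌋ : ℤ) : ℝ)) = θ := by
      funext i
      rw [← Int.self_sub_floor]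
      field_simp
      ring
    have heq : TTa U V A0 A B C θ =
        TTa U V A0 A B C (fun i => 2 * Real.pi * Int.fract (θ i / (2 * Real.pi))) := by
      conv_lhs => rw [← hfun]
      rw [TTa_periodic]
    rw [heq]
    refine le_trans ?_ (le_iSup (fun θ'' : Fin m → ℝ =>
      ⨆ (_ : ∀ i, θ'' i ∈ Set.Icc (0:ℝ) (2*Real.pi)), (‖TTa U V A0 A B C θ''‖₊ : ℝ≥0∞))
      (fun i => 2 * Real.pi * Int.fract (θ i / (2 * Real.pi))))
    exact le_iSup (fun _ : (∀ i, (2 * Real.pi * Int.fract (θ i / (2 * Real.pi))) ∈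
        Set.Icc (0:ℝ) (2*Real.pi)) =>
      (‖TTa U V A0 A B C (fun i => 2 * Real.pi * Int.fract (θ i / (2 * Real.pi)))‖₊ : ℝ≥0∞))
      hmem
  apply le_antisymm
  · -- strong H∞ norm ≤ sup over torus
    unfold strongHinf Hinf
    refine (iInf_le _ 1).trans ((iInf_le _ one_pos).trans ?_)
    refine iSup₂_le fun τ' _ => iSup_le fun ω => ?_
    show (‖Taf U V A0 A B C τ' ω‖₊ : ℝ≥0∞) ≤ _
    rw [Taf_eq_TTa]
    exact key _
  · -- sup over torus ≤ strong H∞ norm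
    refine iSup₂_le fun θ _ => le_iInf fun ε => le_iInf fun hε => ?_
    -- choose a large frequency ω
    obtain ⟨ω, hωpos, hωbig⟩ : ∃ ω : ℝ, 0 < ω ∧ ∀ i, |θ i| + Real.pi < ω * min ε (τ i) := by
      refine ⟨1 + ∑ j, (|θ j| + Real.pi) / min ε (τ j), ?_, ?_⟩
      · have h0 : (0:ℝ) ≤ ∑ j, (|θ j| + Real.pi) / min ε (τ j) :=
          Finset.sum_nonneg fun j _ =>
            le_of_lt (div_pos (by positivity) (lt_min hε (hτ j)))
        linarith
      · intro i
        have hmin : (0:ℝ) < min ε (τ i) := lt_min hε (hτ i)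
        have h1 : (|θ i| + Real.pi) / min ε (τ i) ≤ ∑ j, (|θ j| + Real.pi) / min ε (τ j) :=
          Finset.single_le_sum (f := fun j => (|θ j| + Real.pi) / min ε (τ j))
            (fun j _ => le_of_lt (div_pos (by positivity) (lt_min hε (hτ j))))
            (Finset.mem_univ i)
        have h2 : (|θ i| + Real.pi) / min ε (τ i) <
            1 + ∑ j, (|θ j| + Real.pi) / min ε (τ j) := by linarith
        rw [div_lt_iff₀ hmin] at h2
        calc |θ i| + Real.pi < (1 + ∑ j, (|θ j| + Real.pi) / min ε (τ j)) * min ε (τ i) := h2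
          _ = (1 + ∑ j, (|θ j| + Real.pi) / min ε (τ j)) * min ε (τ i) := rfl
    -- the perturbed delay vector
    set τ' : Fin m → ℝ :=
      fun i => (θ i + 2 * Real.pi * ((round (ω * τ i / (2 * Real.pi)) : ℤ) : ℝ)) / ω with hτ'
    have hbound : ∀ i, |τ' i - τ i| < min ε (τ i) := by
      intro i
      have hb := round_bound (ω * τ i)
      have h1 : τ' i - τ i =
          (θ i + (2 * Real.pi * ((round (ω * τ i / (2 * Real.pi)) : ℤ) : ℝ) - ω * τ i)) / ω := by
        simp only [hτ']
        field_simp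
        ring
      have h3 : |θ i + (2 * Real.pi * ((round (ω * τ i / (2 * Real.pi)) : ℤ) : ℝ) - ω * τ i)|
          ≤ |θ i| + Real.pi :=
        (abs_add_le _ _).trans (by linarith [hb])
      rw [h1, abs_div, abs_of_pos hωpos, div_lt_iff₀ hωpos]
      calc _ ≤ |θ i| + Real.pi := h3
        _ < ω * min ε (τ i) := hωbig i
        _ = min ε (τ i) * ω := mul_comm _ _
    have hdist : dist τ' τ < ε := by
      rw [dist_pi_lt_iff hε]
      intro i
      rw [Real.dist_eq]
      exact lt_of_lt_of_le (hbound i) (min_le_left _ _)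
    have hpos : ∀ i, 0 ≤ τ' i := by
      intro i
      have h1 : τ i - τ' i ≤ |τ' i - τ i| := by
        rw [abs_sub_comm]
        exact le_abs_self _
      have h2 : |τ' i - τ i| < τ i := lt_of_lt_of_le (hbound i) (min_le_right _ _)
      linarith
    have hωτ' : (fun i => ω * τ' i) =
        fun i => θ i + 2 * Real.pi * ((round (ω * τ i / (2 * Real.pi)) : ℤ) : ℝ) := by
      funext i
      simp only [hτ']
      field_simp
    have hTTa : TTa U V A0 A B C θ = Taf U V A0 A B C τ' ω := by
      rw [Taf_eq_TTa, hωτ', TTa_periodic]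
    refine le_iSup₂_of_le τ' ⟨hdist, hpos⟩ ?_
    rw [hTTa]
    show (‖Taf U V A0 A B C τ' ω‖₊ : ℝ≥0∞) ≤ ⨆ w : ℝ, (‖Taf U V A0 A B C τ' w‖₊ : ℝ≥0∞)
    exact le_iSup (fun w => (‖Taf U V A0 A B C τ' w‖₊ : ℝ≥0∞)) ω
end
end

section
/- Let ξ > strong-H∞(T_a(jω, τ⃗)). Then ξ is a singular value of T(jω₀, τ⃗) for some frequency ω₀ if and only if the Hamiltonian-like matrix pencil condition holds: there exist nonzero vectors u, v with (jω₀E - A_0 - Σ A_i e^{-jω₀τ_i})u = ξ^{-1} B B^T v and ξ^{-1} C^T C u = -(jω₀E + A_0 + Σ A_i e^{jω₀τ_i})^T v. In other words, the singular-value level-crossing equation σ_k(T(jω₀)) = ξ is equivalent to the singularity of the 2n×2n matrix H(jω₀, ξ). -/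
open scoped Matrix.Norms.L2Operator ENNReal NNReal
open Matrix Filter Topology Set

noncomputable section

variable {n m p q v a b : ℕ}

section HamiltonianAux

open Matrix

lemma cmx_conjTranspose (M : Matrix (Fin a) (Fin b) ℝ) : (cmx M)ᴴ = (cmx M)ᵀ := by
  ext i j; simp [cmx]

lemma real_smul_cvec {k : ℕ} (r : ℝ) (w : Fin k → ℂ) : r • w = ((r : ℂ)) • w := by
  ext i; simp [Complex.real_smul]

/-- the (2,2)-block matrix equals minus the conjugate transpose of charM -/
lemma block22_eq (E A0 : Matrix (Fin n) (Fin n) ℝ) (A : Fin m → Matrix (Fin n) (Fin n) ℝ)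
    (τ : Fin m → ℝ) (ω : ℝ) :
    ((Complex.I * (ω : ℂ)) • cmx E + cmx A0 +
        ∑ i, Complex.exp (Complex.I * (ω : ℂ) * (τ i : ℂ)) • cmx (A i))ᵀ =
      -(charM E A0 A τ (Complex.I * (ω : ℂ)))ᴴ := by
  have hstar : ∀ i : Fin m, star (Complex.exp (-(Complex.I * (ω : ℂ) * (τ i : ℂ)))) =
      Complex.exp (Complex.I * (ω : ℂ) * (τ i : ℂ)) := by
    intro i; rw [Complex.star_def, ← Complex.exp_conj]; simp
  have hsI : star (Complex.I * (ω : ℂ)) = -(Complex.I * (ω : ℂ)) := by simp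
  ext i j
  simp only [charM, Matrix.transpose_apply, Matrix.conjTranspose_apply, Matrix.neg_apply,
    Matrix.sub_apply, Matrix.add_apply, Matrix.smul_apply, Matrix.sum_apply, star_sub, star_sum,
    star_smul, hstar, hsI, cmx, Matrix.map_apply, Complex.star_def, Complex.conj_ofReal]
  simp only [smul_eq_mul]
  ring

lemma mulVec_cancel' {k : ℕ} {Δ : Matrix (Fin k) (Fin k) ℂ} (h : IsUnit Δ)
    {u : Fin k → ℂ} (h0 : Δ *ᵥ u = 0) : u = 0 := by
  have := mulVec_injective_iff_isUnit.mpr h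
  exact this (by simpa using h0)

lemma mul_inv_cancel_vec {k : ℕ} {Δ : Matrix (Fin k) (Fin k) ℂ} (h : IsUnit Δ)
    (y : Fin k → ℂ) : Δ *ᵥ (Δ⁻¹ *ᵥ y) = y := by
  rw [mulVec_mulVec, mul_nonsing_inv _ ((isUnit_iff_isUnit_det _).mp h), one_mulVec]

open scoped ComplexOrder in
lemma sv_key {n p q : ℕ} (Δ : Matrix (Fin n) (Fin n) ℂ) (Bc : Matrix (Fin n) (Fin p) ℂ)
    (Cc : Matrix (Fin q) (Fin n) ℂ) (hΔ : IsUnit Δ) {ξ : ℝ} (hξ : 0 < ξ) :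
    (∃ x : Fin p → ℂ, x ≠ 0 ∧ ((Cc * Δ⁻¹ * Bc)ᴴ * (Cc * Δ⁻¹ * Bc)) *ᵥ x = ((ξ ^ 2 : ℝ) : ℂ) • x) ↔
    (∃ u1 v1 : Fin n → ℂ, u1 ≠ 0 ∧ v1 ≠ 0 ∧
      Δ *ᵥ u1 = ξ⁻¹ • ((Bc * Bcᴴ) *ᵥ v1) ∧
      ξ⁻¹ • ((Ccᴴ * Cc) *ᵥ u1) = Δᴴ *ᵥ v1) := by
  have hξ0 : (ξ : ℂ) ≠ 0 := Complex.ofReal_ne_zero.mpr hξ.ne'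
  have hΔH : IsUnit Δᴴ := (isUnit_conjTranspose Δ).mpr hΔ
  have hTH : (Cc * Δ⁻¹ * Bc)ᴴ = Bcᴴ * (Δᴴ)⁻¹ * Ccᴴ := by
    rw [conjTranspose_mul, conjTranspose_mul, conjTranspose_nonsing_inv, Matrix.mul_assoc]
  constructor
  · rintro ⟨x, hx0, hx⟩
    have hξ2 : ((ξ ^ 2 : ℝ) : ℂ) ≠ 0 := Complex.ofReal_ne_zero.mpr (by positivity)
    set T := Cc * Δ⁻¹ * Bc with hT
    set u : Fin n → ℂ := Δ⁻¹ *ᵥ (Bc *ᵥ x) with hu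
    have hTx : T *ᵥ x = Cc *ᵥ u := by
      rw [hT, hu, mulVec_mulVec, ← mulVec_mulVec]
    have hCu : Cc *ᵥ u ≠ 0 := by
      intro h
      have : ((ξ ^ 2 : ℝ) : ℂ) • x = 0 := by
        rw [← hx, ← mulVec_mulVec, hTx, h, mulVec_zero]
      rcases smul_eq_zero.mp this with h' | h'
      · exact absurd h' hξ2
      · exact hx0 h'
    set w : Fin n → ℂ := (Ccᴴ * Cc) *ᵥ u with hw
    set v1 : Fin n → ℂ := ξ⁻¹ • ((Δᴴ)⁻¹ *ᵥ w) with hv1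
    refine ⟨u, v1, ?_, ?_, ?_, ?_⟩
    · intro h; exact hCu (by rw [h, mulVec_zero])
    · intro h
      have h1 : (Δᴴ)⁻¹ *ᵥ w = 0 := by
        have := h
        rw [hv1, smul_eq_zero] at this
        rcases this with h' | h'
        · exact absurd h' (inv_ne_zero hξ.ne')
        · exact h'
      have hw0 : w = 0 := by
        have := congrArg (fun y => Δᴴ *ᵥ y) h1
        simpa [mul_inv_cancel_vec hΔH] using this
      rw [hw] at hw0
      exact hCu ((conjTranspose_mul_self_mulVec_eq_zero Cc u).mp hw0)
    · have hΔu : Δ *ᵥ u = Bc *ᵥ x := mul_inv_cancel_vec hΔ _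
      rw [hΔu, hv1]
      rw [mulVec_smul]
      have hmain : (Bc * Bcᴴ) *ᵥ ((Δᴴ)⁻¹ *ᵥ w) = ((ξ ^ 2 : ℝ) : ℂ) • (Bc *ᵥ x) := by
        have : (Bc * Bcᴴ) *ᵥ ((Δᴴ)⁻¹ *ᵥ w) = Bc *ᵥ ((Tᴴ * T) *ᵥ x) := by
          rw [hw, hu, hTH, hT]
          simp only [mulVec_mulVec, ← Matrix.mul_assoc]
        rw [this, hx, mulVec_smul]
      rw [hmain, real_smul_cvec, real_smul_cvec, smul_smul, smul_smul,
        show ((ξ⁻¹ : ℝ) : ℂ) * ((ξ⁻¹ : ℝ) : ℂ) * ((ξ ^ 2 : ℝ) : ℂ) = 1 from by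
          push_cast; field_simp, one_smul]
    · rw [hv1, mulVec_smul, mul_inv_cancel_vec hΔH, hw]
  · rintro ⟨u, v1, hu0, hv0, h1, h2⟩
    refine ⟨Bcᴴ *ᵥ v1, ?_, ?_⟩
    · intro h
      have hBB : (Bc * Bcᴴ) *ᵥ v1 = 0 := by rw [← mulVec_mulVec, h, mulVec_zero]
      rw [hBB, smul_zero] at h1
      exact hu0 (mulVec_cancel' hΔ h1)
    · have hBBv : (Bc * Bcᴴ) *ᵥ v1 = ξ • (Δ *ᵥ u) := by
        rw [h1, smul_smul, mul_inv_cancel₀ hξ.ne', one_smul]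
      have hCCu : (Ccᴴ * Cc) *ᵥ u = ξ • (Δᴴ *ᵥ v1) := by
        rw [← h2, smul_smul, mul_inv_cancel₀ hξ.ne', one_smul]
      have hstep1 : Δ⁻¹ *ᵥ ((Bc * Bcᴴ) *ᵥ v1) = ξ • u := by
        rw [hBBv, mulVec_smul, mulVec_mulVec,
          nonsing_inv_mul _ ((isUnit_iff_isUnit_det _).mp hΔ), one_mulVec]
      calc ((Cc * Δ⁻¹ * Bc)ᴴ * (Cc * Δ⁻¹ * Bc)) *ᵥ (Bcᴴ *ᵥ v1)
          = Bcᴴ *ᵥ ((Δᴴ)⁻¹ *ᵥ ((Ccᴴ * Cc) *ᵥ (Δ⁻¹ *ᵥ ((Bc * Bcᴴ) *ᵥ v1)))) := by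
            rw [hTH]
            simp only [mulVec_mulVec, ← Matrix.mul_assoc]
        _ = Bcᴴ *ᵥ ((Δᴴ)⁻¹ *ᵥ ((Ccᴴ * Cc) *ᵥ (ξ • u))) := by rw [hstep1]
        _ = Bcᴴ *ᵥ ((Δᴴ)⁻¹ *ᵥ (ξ • (ξ • (Δᴴ *ᵥ v1)))) := by rw [mulVec_smul, hCCu]
        _ = ξ • ξ • (Bcᴴ *ᵥ ((Δᴴ)⁻¹ *ᵥ (Δᴴ *ᵥ v1))) := by
            simp only [mulVec_smul]
        _ = ξ • ξ • (Bcᴴ *ᵥ v1) := by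
            simp only [mulVec_mulVec, Matrix.mul_assoc,
              nonsing_inv_mul _ ((isUnit_iff_isUnit_det _).mp hΔH), Matrix.mul_one]
        _ = ((ξ ^ 2 : ℝ) : ℂ) • (Bcᴴ *ᵥ v1) := by
            rw [real_smul_cvec, real_smul_cvec, smul_smul]
            push_cast
            ring_nf

lemma sv_keydet {k : ℕ} (Δ P Q : Matrix (Fin k) (Fin k) ℂ) (hΔ : IsUnit Δ) :
    (∃ u1 v1 : Fin k → ℂ, u1 ≠ 0 ∧ v1 ≠ 0 ∧
        Δ *ᵥ u1 = P *ᵥ v1 ∧ Q *ᵥ u1 = Δᴴ *ᵥ v1) ↔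
      (Matrix.fromBlocks Δ (-P) Q (-Δᴴ)).det = 0 := by
  have hΔH : IsUnit Δᴴ := (isUnit_conjTranspose Δ).mpr hΔ
  rw [← Matrix.exists_mulVec_eq_zero_iff]
  constructor
  · rintro ⟨u1, v1, hu0, hv0, h1, h2⟩
    refine ⟨Sum.elim u1 v1, ?_, ?_⟩
    · intro h
      exact hu0 (funext fun i => congrFun h (Sum.inl i))
    · rw [fromBlocks_mulVec]
      simp only [Sum.elim_comp_inl, Sum.elim_comp_inr]
      have e1 : Δ *ᵥ u1 + (-P) *ᵥ v1 = 0 := by rw [neg_mulVec, h1, add_neg_cancel]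
      have e2 : Q *ᵥ u1 + (-Δᴴ) *ᵥ v1 = 0 := by rw [neg_mulVec, h2, add_neg_cancel]
      rw [e1, e2]
      exact Sum.elim_zero_zero
  · rintro ⟨w, hw0, hw⟩
    set u1 : Fin k → ℂ := fun i => w (Sum.inl i) with hu
    set v1 : Fin k → ℂ := fun i => w (Sum.inr i) with hv
    have hwe : w = Sum.elim u1 v1 := funext fun i => by cases i <;> rfl
    rw [hwe, fromBlocks_mulVec] at hw
    simp only [Sum.elim_comp_inl, Sum.elim_comp_inr] at hw
    have e1 : Δ *ᵥ u1 + (-P) *ᵥ v1 = 0 := funext fun i => congrFun hw (Sum.inl i)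
    have e2 : Q *ᵥ u1 + (-Δᴴ) *ᵥ v1 = 0 := funext fun i => congrFun hw (Sum.inr i)
    rw [neg_mulVec, add_neg_eq_zero] at e1 e2
    have hv1 : v1 ≠ 0 := by
      intro h
      have hu1 : u1 = 0 := by
        apply mulVec_cancel' hΔ
        rw [e1, h, mulVec_zero]
      apply hw0
      rw [hwe, hu1, h, Sum.elim_zero_zero]
    have hu1 : u1 ≠ 0 := by
      intro h
      have : v1 = 0 := by
        apply mulVec_cancel' hΔH
        rw [← e2, h, mulVec_zero]
      exact hv1 this
    exact ⟨u1, v1, hu1, hv1, e1, e2⟩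

end HamiltonianAux

theorem singular_value_level_iff_hamiltonian_singular {n m p q v : ℕ}
    (E A0 : Matrix (Fin n) (Fin n) ℝ) (A : Fin m → Matrix (Fin n) (Fin n) ℝ)
    (B : Matrix (Fin n) (Fin p) ℝ) (C : Matrix (Fin q) (Fin n) ℝ)
    (U V : Matrix (Fin n) (Fin v) ℝ) (τ : Fin m → ℝ)
    (hrank : E.rank = n - v) (hUrank : U.rank = v) (hVrank : V.rank = v)
    (hUE : Uᵀ * E = 0) (hEV : E * V = 0)
    (hA0 : IsUnit (Uᵀ * A0 * V))
    (hstab : StrongStable E A0 A U V τ)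
    (hτ : ∀ i, 0 < τ i) (ξ : ℝ)
    (hξ : strongHinf (fun τ' ω => Taf U V A0 A B C τ' ω) τ < ENNReal.ofReal ξ) :
    ∀ ω₀ : ℝ, IsUnit (charM E A0 A τ (Complex.I * (ω₀ : ℂ))) →
      ((IsSingularValue ξ (Tf E A0 A B C τ ω₀) ↔
        ∃ u1 v1 : Fin n → ℂ, u1 ≠ 0 ∧ v1 ≠ 0 ∧
          (charM E A0 A τ (Complex.I * (ω₀ : ℂ))) *ᵥ u1 =
            ξ⁻¹ • ((cmx B * (cmx B)ᵀ) *ᵥ v1) ∧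
          ξ⁻¹ • (((cmx C)ᵀ * cmx C) *ᵥ u1) =
            -((((Complex.I * (ω₀ : ℂ)) • cmx E + cmx A0 +
                ∑ i, Complex.exp (Complex.I * (ω₀ : ℂ) * (τ i : ℂ)) • cmx (A i))ᵀ) *ᵥ v1)) ∧
      (IsSingularValue ξ (Tf E A0 A B C τ ω₀) ↔
        (Matrix.fromBlocks
          (charM E A0 A τ (Complex.I * (ω₀ : ℂ)))
          (-(ξ⁻¹ • (cmx B * (cmx B)ᵀ)))
          (ξ⁻¹ • ((cmx C)ᵀ * cmx C))
          (((Complex.I * (ω₀ : ℂ)) • cmx E + cmx A0 +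
            ∑ i, Complex.exp (Complex.I * (ω₀ : ℂ) * (τ i : ℂ)) • cmx (A i))ᵀ)).det = 0)) := by
  
  intro ω₀ hinv
  have hpos : 0 < ξ := ENNReal.ofReal_pos.mp (lt_of_le_of_lt zero_le hξ)
  have hsv : IsSingularValue ξ (Tf E A0 A B C τ ω₀) ↔
      ∃ x : Fin p → ℂ, x ≠ 0 ∧
        ((cmx C * (charM E A0 A τ (Complex.I * (ω₀ : ℂ)))⁻¹ * cmx B)ᴴ *
          (cmx C * (charM E A0 A τ (Complex.I * (ω₀ : ℂ)))⁻¹ * cmx B)) *ᵥ x =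
          ((ξ ^ 2 : ℝ) : ℂ) • x := by
    unfold IsSingularValue Tf
    exact ⟨fun h => h.2, fun h => ⟨hpos.le, h⟩⟩
  have hkey := sv_key (charM E A0 A τ (Complex.I * (ω₀ : ℂ))) (cmx B) (cmx C) hinv hpos
  have hBt : (cmx B)ᵀ = (cmx B)ᴴ := (cmx_conjTranspose B).symm
  have hCt : (cmx C)ᵀ = (cmx C)ᴴ := (cmx_conjTranspose C).symm
  have hb22 := block22_eq E A0 A τ ω₀
  constructor
  · rw [hb22]
    simp only [hBt, hCt, neg_mulVec, neg_neg]
    exact hsv.trans hkey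
  · rw [hb22]
    simp only [hBt, hCt]
    have hdetiff := sv_keydet (charM E A0 A τ (Complex.I * (ω₀ : ℂ)))
      (ξ⁻¹ • (cmx B * (cmx B)ᴴ)) (ξ⁻¹ • ((cmx C)ᴴ * cmx C)) hinv
    simp only [smul_mulVec] at hdetiff
    exact hsv.trans (hkey.trans hdetiff)
end
end

section
/- The transfer function T and the asymptotic transfer function T_a converge to each other at high frequencies: ‖T(jω, τ⃗) - T_a(jω, τ⃗)‖ → 0 as |ω| → ∞. -/
open scoped Matrix.Norms.L2Operator ENNReal NNReal
open Matrix Filter Topology Set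

noncomputable section

variable {n m p q v a b : ℕ}

namespace TsubTaAux

variable {n m p q v : ℕ}

/-- the complexified delay matrix A₀ + ∑ Aᵢ e^{-jωτᵢ} -/
def Acx (A0 : Matrix (Fin n) (Fin n) ℝ) (A : Fin m → Matrix (Fin n) (Fin n) ℝ)
    (τ : Fin m → ℝ) (ω : ℝ) : Matrix (Fin n) (Fin n) ℂ :=
  cmx A0 + ∑ i, Complex.exp (-(Complex.I * (ω : ℂ) * (τ i : ℂ))) • cmx (A i)

lemma cmx_mul {a b c : ℕ} (M : Matrix (Fin a) (Fin b) ℝ) (N : Matrix (Fin b) (Fin c) ℝ) :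
    cmx (M * N) = cmx M * cmx N := by
  ext i j
  simp only [cmx, Matrix.map_apply, Matrix.mul_apply]
  push_cast
  rfl

lemma cmx_zero {a b : ℕ} : cmx (0 : Matrix (Fin a) (Fin b) ℝ) = 0 := by
  ext i j; simp [cmx]

lemma restructure {n p q v : ℕ} (Cc : Matrix (Fin q) (Fin n) ℂ) (Bc : Matrix (Fin n) (Fin p) ℂ)
    (Di : Matrix (Fin n) (Fin n) ℂ) (Vc : Matrix (Fin n) (Fin v) ℂ)
    (Mi : Matrix (Fin v) (Fin v) ℂ) (Uc : Matrix (Fin v) (Fin n) ℂ) :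
    Cc * Di * Bc - (-(Cc * Vc * Mi * (Uc * Bc))) = Cc * ((Di + Vc * Mi * Uc) * Bc) := by
  simp only [sub_neg_eq_add, Matrix.add_mul, Matrix.mul_add, Matrix.mul_assoc]

lemma charM_eq (E A0 : Matrix (Fin n) (Fin n) ℝ) (A : Fin m → Matrix (Fin n) (Fin n) ℝ)
    (τ : Fin m → ℝ) (ω : ℝ) :
    charM E A0 A τ (Complex.I * (ω : ℂ)) =
      (Complex.I * (ω : ℂ)) • cmx E - Acx A0 A τ ω := by
  simp only [charM, Acx, sub_sub]

lemma M0tau_eq (U V : Matrix (Fin n) (Fin v) ℝ) (A0 : Matrix (Fin n) (Fin n) ℝ)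
    (A : Fin m → Matrix (Fin n) (Fin n) ℝ) (τ : Fin m → ℝ) (ω : ℝ) :
    M0tau U V A0 A τ ω = (cmx U)ᵀ * Acx A0 A τ ω * cmx V := by
  simp only [M0tau, Acx, Matrix.mul_add, Matrix.add_mul, Matrix.mul_sum, Matrix.sum_mul,
    Matrix.mul_smul, Matrix.smul_mul]

lemma norm_exp_I_mul (x : ℝ) (t : ℝ) : ‖Complex.exp (-(Complex.I * (x:ℂ) * (t:ℂ)))‖ = 1 := by
  rw [Complex.norm_exp]
  simp [Complex.mul_re]

lemma range_eq_ker_aux (E : Matrix (Fin n) (Fin n) ℝ) (U : Matrix (Fin n) (Fin v) ℝ)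
    (hrank : E.rank = n - v) (hUrank : U.rank = v) (hUE : Uᵀ * E = 0) :
    LinearMap.range (Matrix.mulVecLin E) = LinearMap.ker (Matrix.mulVecLin Uᵀ) := by
  have hle : LinearMap.range (Matrix.mulVecLin E) ≤ LinearMap.ker (Matrix.mulVecLin Uᵀ) := by
    rintro x ⟨y, rfl⟩
    simp only [LinearMap.mem_ker, Matrix.mulVecLin_apply, Matrix.mulVec_mulVec, hUE,
      Matrix.zero_mulVec]
  refine Submodule.eq_of_le_of_finrank_le hle ?_
  have h1 : Module.finrank ℝ (LinearMap.range (Matrix.mulVecLin Uᵀ)) +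
      Module.finrank ℝ (LinearMap.ker (Matrix.mulVecLin Uᵀ)) = n := by
    rw [LinearMap.finrank_range_add_finrank_ker]
    simp [Module.finrank_pi]
  have h2 : Module.finrank ℝ (LinearMap.range (Matrix.mulVecLin Uᵀ)) = v := by
    have := U.rank_transpose
    rw [hUrank] at this
    exact this
  have h3 : Module.finrank ℝ (LinearMap.ker (Matrix.mulVecLin Uᵀ)) = n - v := by omega
  have h4 : Module.finrank ℝ (LinearMap.range (Matrix.mulVecLin E)) = n - v := hrank
  omega

lemma cmx_mulVec_ofReal (M : Matrix (Fin n) (Fin n) ℝ) (w : Fin n → ℝ) :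
    cmx M *ᵥ (fun i => (w i : ℂ)) = fun j => ((M *ᵥ w) j : ℂ) := by
  funext j
  simp only [Matrix.mulVec, dotProduct, cmx, Matrix.map_apply]
  norm_cast

lemma mem_range_cmx (E : Matrix (Fin n) (Fin n) ℝ) (U : Matrix (Fin n) (Fin v) ℝ)
    (hrank : E.rank = n - v) (hUrank : U.rank = v) (hUE : Uᵀ * E = 0) :
    ∀ x : Fin n → ℂ, (cmx U)ᵀ *ᵥ x = 0 →
      x ∈ LinearMap.range (Matrix.mulVecLin (cmx E)) := by
  have hker := range_eq_ker_aux E U hrank hUrank hUE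
  have hreal : ∀ w : Fin n → ℝ, Uᵀ *ᵥ w = 0 → ∃ y, E *ᵥ y = w := by
    intro w hw
    have : w ∈ LinearMap.ker (Matrix.mulVecLin Uᵀ) := by
      rw [LinearMap.mem_ker, Matrix.mulVecLin_apply]; exact hw
    rw [← hker] at this
    obtain ⟨y, hy⟩ := this
    exact ⟨y, hy⟩
  intro x hx
  set a : Fin n → ℝ := fun i => (x i).re with ha
  set b : Fin n → ℝ := fun i => (x i).im with hb
  have hUa : Uᵀ *ᵥ a = 0 := by
    funext j
    have h1 : ((cmx U)ᵀ *ᵥ x) j = 0 := congrFun hx j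
    have : (((cmx U)ᵀ *ᵥ x) j).re = 0 := by rw [h1]; simp
    simpa [Matrix.mulVec, dotProduct, cmx, Matrix.map_apply, Matrix.transpose_apply,
      Complex.re_sum, Complex.re_ofReal_mul, ha] using this
  have hUb : Uᵀ *ᵥ b = 0 := by
    funext j
    have h1 : ((cmx U)ᵀ *ᵥ x) j = 0 := congrFun hx j
    have : (((cmx U)ᵀ *ᵥ x) j).im = 0 := by rw [h1]; simp
    simpa [Matrix.mulVec, dotProduct, cmx, Matrix.map_apply, Matrix.transpose_apply,
      Complex.im_sum, Complex.im_ofReal_mul, hb] using this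
  obtain ⟨ya, hya⟩ := hreal a hUa
  obtain ⟨yb, hyb⟩ := hreal b hUb
  refine ⟨(fun i => (ya i : ℂ)) + Complex.I • (fun i => (yb i : ℂ)), ?_⟩
  rw [Matrix.mulVecLin_apply, Matrix.mulVec_add, Matrix.mulVec_smul,
    cmx_mulVec_ofReal, cmx_mulVec_ofReal, hya, hyb]
  funext j
  simp only [Pi.add_apply, Pi.smul_apply, smul_eq_mul]
  rw [mul_comm]
  exact Complex.re_add_im (x j)

lemma exists_G (E : Matrix (Fin n) (Fin n) ℝ) (U : Matrix (Fin n) (Fin v) ℝ)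
    (hrank : E.rank = n - v) (hUrank : U.rank = v) (hUE : Uᵀ * E = 0) :
    ∃ G : Matrix (Fin n) (Fin n) ℂ, ∀ x : Fin n → ℂ, (cmx U)ᵀ *ᵥ x = 0 →
      cmx E *ᵥ (G *ᵥ x) = x := by
  set f := Matrix.mulVecLin (cmx E)
  obtain ⟨g, hg⟩ := f.rangeRestrict.exists_rightInverse_of_surjective
    (LinearMap.range_eq_top.2 f.surjective_rangeRestrict)
  obtain ⟨Q, hQ⟩ := Submodule.exists_isCompl (LinearMap.range f)
  set π := (LinearMap.range f).linearProjOfIsCompl Q hQ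
  set Glin : (Fin n → ℂ) →ₗ[ℂ] (Fin n → ℂ) := g ∘ₗ π
  refine ⟨LinearMap.toMatrix' Glin, ?_⟩
  intro x hx
  have hxr : x ∈ LinearMap.range f := mem_range_cmx E U hrank hUrank hUE x hx
  have h1 : (LinearMap.toMatrix' Glin) *ᵥ x = Glin x := by
    rw [← Matrix.toLin'_apply, Matrix.toLin'_toMatrix']
  rw [h1]
  have h2 : π x = ⟨x, hxr⟩ := Submodule.linearProjOfIsCompl_apply_left hQ ⟨x, hxr⟩
  have h3 := LinearMap.congr_fun hg (π x)
  simp only [LinearMap.comp_apply, LinearMap.id_apply] at h3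
  have h4 : f (g (π x)) = (π x : Fin n → ℂ) := congrArg Subtype.val h3
  show f (Glin x) = x
  simp only [Glin, LinearMap.comp_apply]
  rw [h4, h2]

lemma exists_M_bound (U V : Matrix (Fin n) (Fin v) ℝ) (A0 : Matrix (Fin n) (Fin n) ℝ)
    (A : Fin m → Matrix (Fin n) (Fin n) ℝ) (τ : Fin m → ℝ)
    (hA22 : ∀ θ : Fin m → ℝ, IsUnit (AA22 U V A0 A θ)) :
    ∃ c : ℝ, 0 ≤ c ∧ ∀ ω : ℝ, IsUnit (M0tau U V A0 A τ ω) ∧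
      ‖(M0tau U V A0 A τ ω)⁻¹‖ ≤ c := by
  set F : (Fin m → ℂ) → Matrix (Fin v) (Fin v) ℂ := fun z =>
    (cmx U)ᵀ * cmx A0 * cmx V + ∑ i, z i • ((cmx U)ᵀ * cmx (A i) * cmx V) with hF
  set K : Set (Fin m → ℂ) := Set.pi Set.univ (fun _ => Metric.sphere (0:ℂ) 1) with hK
  have hKc : IsCompact K := isCompact_univ_pi fun _ => isCompact_sphere 0 1
  have hKne : K.Nonempty := ⟨fun _ => 1, by simp [hK, Set.mem_pi]⟩
  have hunit : ∀ z ∈ K, IsUnit (F z) := by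
    intro z hz
    have hz1 : ∀ i, ‖z i‖ = 1 := by
      intro i
      have := hz i (Set.mem_univ i)
      simpa using mem_sphere_zero_iff_norm.1 this
    set θ : Fin m → ℝ := fun i => -Complex.arg (z i) with hθ
    have hzexp : ∀ i, Complex.exp (-(Complex.I * (θ i : ℂ))) = z i := by
      intro i
      have h := Complex.norm_mul_exp_arg_mul_I (z i)
      rw [hz1 i, Complex.ofReal_one, one_mul] at h
      calc Complex.exp (-(Complex.I * (θ i : ℂ)))
          = Complex.exp (((z i).arg : ℂ) * Complex.I) := by
            congr 1; rw [hθ]; push_cast; ring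
        _ = z i := h
    have hsum : (∑ i, Complex.exp (-(Complex.I * (θ i : ℂ))) • ((cmx U)ᵀ * cmx (A i) * cmx V))
        = ∑ i, z i • ((cmx U)ᵀ * cmx (A i) * cmx V) :=
      Finset.sum_congr rfl fun i _ => by rw [hzexp i]
    have hFz : F z = -(AA22 U V A0 A θ) := by
      rw [hF, AA22, neg_sub, hsum]
      abel
    rw [hFz]
    exact (hA22 θ).neg
  have hFc : Continuous F := by
    apply Continuous.add continuous_const
    exact continuous_finset_sum _ fun i _ => ((continuous_apply i).smul continuous_const)
  have hcont : ContinuousOn (fun z => ‖(F z)⁻¹‖) K := by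
    intro z hz
    apply ContinuousAt.continuousWithinAt
    have h1 : ContinuousAt (fun z => Ring.inverse (F z)) z := by
      have := (NormedRing.inverse_continuousAt (hunit z hz).unit)
      have h2 : ContinuousAt Ring.inverse (F z) := by simpa using this
      exact h2.comp hFc.continuousAt
    have h2 : ContinuousAt (fun z => ‖Ring.inverse (F z)‖) z := h1.norm
    simpa only [Matrix.nonsing_inv_eq_ringInverse] using h2
  obtain ⟨z0, hz0K, hz0max⟩ := hKc.exists_isMaxOn hKne hcont
  have hz0 : ∀ z ∈ K, ‖(F z)⁻¹‖ ≤ ‖(F z0)⁻¹‖ := fun z hz => hz0max hz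
  refine ⟨‖(F z0)⁻¹‖, norm_nonneg _, fun ω => ?_⟩
  set zω : Fin m → ℂ := fun i => Complex.exp (-(Complex.I * (ω:ℂ) * (τ i : ℂ))) with hzw
  have hzω : zω ∈ K := by
    intro i _
    simpa only [mem_sphere_zero_iff_norm] using norm_exp_I_mul ω (τ i)
  have hMF : M0tau U V A0 A τ ω = F zω := rfl
  exact ⟨hMF ▸ hunit zω hzω, by rw [hMF]; exact hz0 zω hzω⟩

lemma key_identity {n v : ℕ} (D Ac Ecx G : Matrix (Fin n) (Fin n) ℂ)
    (Vc : Matrix (Fin n) (Fin v) ℂ) (Uc : Matrix (Fin v) (Fin n) ℂ)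
    (lam : ℂ) (hlam : lam ≠ 0)
    (hDdef : D = lam • Ecx - Ac)
    (hD : IsUnit D) (hM : IsUnit (Uc * Ac * Vc))
    (hEV : Ecx * Vc = 0)
    (hG : ∀ x : Fin n → ℂ, Uc *ᵥ x = 0 → Ecx *ᵥ (G *ᵥ x) = x) :
    D⁻¹ + Vc * (Uc * Ac * Vc)⁻¹ * Uc =
      lam⁻¹ • ((1 + D⁻¹ * Ac) * (G * (1 - Ac * Vc * (Uc * Ac * Vc)⁻¹ * Uc))) := by
  have hDdet : IsUnit D.det := (Matrix.isUnit_iff_isUnit_det D).1 hD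
  have hMdet : IsUnit (Uc * Ac * Vc).det := (Matrix.isUnit_iff_isUnit_det _).1 hM
  set M := Uc * Ac * Vc with hMdef
  set R' : Matrix (Fin n) (Fin n) ℂ := 1 - Ac * Vc * M⁻¹ * Uc with hR'
  have hDV : D * Vc = -(Ac * Vc) := by
    rw [hDdef, Matrix.sub_mul, Matrix.smul_mul, hEV, smul_zero, zero_sub]
  have h1 : D * (D⁻¹ + Vc * M⁻¹ * Uc) = R' := by
    rw [Matrix.mul_add, Matrix.mul_nonsing_inv D hDdet, hR']
    congr 1
    rw [← Matrix.mul_assoc, ← Matrix.mul_assoc, hDV]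
    simp [Matrix.neg_mul, sub_eq_add_neg]
  have h2 : D⁻¹ + Vc * M⁻¹ * Uc = D⁻¹ * R' := by
    rw [← h1, ← Matrix.mul_assoc, Matrix.nonsing_inv_mul D hDdet, Matrix.one_mul]
  have h3 : Uc * R' = 0 := by
    rw [hR', Matrix.mul_sub, Matrix.mul_one]
    rw [show Uc * (Ac * Vc * M⁻¹ * Uc) = M * M⁻¹ * Uc by
      rw [hMdef]; simp only [Matrix.mul_assoc]]
    rw [Matrix.mul_nonsing_inv M hMdet, Matrix.one_mul, sub_self]
  have h4 : Ecx * (G * R') = R' := by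
    ext i j
    have hcol : Uc *ᵥ (fun k => R' k j) = 0 := by
      funext l
      have := congrFun (congrFun h3 l) j
      simpa [Matrix.mulVec, dotProduct, Matrix.mul_apply] using this
    have := congrFun (hG _ hcol) i
    simpa [Matrix.mulVec, dotProduct, Matrix.mul_apply, Finset.mul_sum] using this
  have h5 : D⁻¹ * Ecx = lam⁻¹ • (1 + D⁻¹ * Ac) := by
    have hDD : D⁻¹ * D = 1 := Matrix.nonsing_inv_mul D hDdet
    have key : D⁻¹ * (lam • Ecx - Ac) = 1 := by rw [← hDdef]; exact hDD
    rw [Matrix.mul_sub, Matrix.mul_smul, sub_eq_iff_eq_add] at key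
    rw [← key, smul_smul, inv_mul_cancel₀ hlam, one_smul]
  calc D⁻¹ + Vc * M⁻¹ * Uc = D⁻¹ * R' := h2
    _ = D⁻¹ * (Ecx * (G * R')) := by rw [h4]
    _ = (D⁻¹ * Ecx) * (G * R') := by rw [Matrix.mul_assoc]
    _ = lam⁻¹ • ((1 + D⁻¹ * Ac) * (G * R')) := by rw [h5, Matrix.smul_mul]

end TsubTaAux


set_option maxHeartbeats 1600000 in
theorem T_sub_Ta_tendsto_zero_high_freq {n m p q v : ℕ}
    (E A0 : Matrix (Fin n) (Fin n) ℝ) (A : Fin m → Matrix (Fin n) (Fin n) ℝ)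
    (B : Matrix (Fin n) (Fin p) ℝ) (C : Matrix (Fin q) (Fin n) ℝ)
    (U V : Matrix (Fin n) (Fin v) ℝ) (τ : Fin m → ℝ)
    (hrank : E.rank = n - v) (hUrank : U.rank = v) (hVrank : V.rank = v)
    (hUE : Uᵀ * E = 0) (hEV : E * V = 0)
    (hA0 : IsUnit (Uᵀ * A0 * V))
    (hstab : StrongStable E A0 A U V τ)
    (hτ : ∀ i, 0 < τ i) :
    Tendsto (fun ω : ℝ => ‖Tf E A0 A B C τ ω - Taf U V A0 A B C τ ω‖)
      (cocompact ℝ) (𝓝 0) := by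
  classical
  open TsubTaAux in
  obtain ⟨⟨ε, hε, hstb⟩, hA22⟩ := hstab
  have hD : ∀ ω : ℝ, IsUnit (charM E A0 A τ (Complex.I * (ω:ℂ))) := by
    intro ω
    exact hstb τ (by simpa using hε) (fun i => (hτ i).le) _ (by simp)
  obtain ⟨c, hc0, hM⟩ := TsubTaAux.exists_M_bound U V A0 A τ hA22
  obtain ⟨G, hG⟩ := TsubTaAux.exists_G E U hrank hUrank hUE
  set aA : ℝ := ‖cmx A0‖ + ∑ i, ‖cmx (A i)‖ with haAdef
  have haA : ∀ ω : ℝ, ‖TsubTaAux.Acx A0 A τ ω‖ ≤ aA := by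
    intro ω
    rw [haAdef]
    refine (norm_add_le _ _).trans ?_
    refine add_le_add le_rfl ?_
    refine (norm_sum_le _ _).trans ?_
    refine Finset.sum_le_sum fun i _ => ?_
    rw [norm_smul, TsubTaAux.norm_exp_I_mul, one_mul]
  have haA0 : 0 ≤ aA := le_trans (norm_nonneg _) (haA 0)
  set k : ℝ := ‖cmx V‖ * c * ‖(cmx U)ᵀ‖ with hkdef
  have hk0 : 0 ≤ k := by rw [hkdef]; exact mul_nonneg (mul_nonneg (norm_nonneg _) hc0) (norm_nonneg _)
  set e1 : ℝ := ‖(1 : Matrix (Fin n) (Fin n) ℂ)‖ with he1def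
  have he10 : 0 ≤ e1 := by rw [he1def]; exact norm_nonneg _
  set g : ℝ := ‖G‖ with hgdef
  have hg0 : 0 ≤ g := by rw [hgdef]; exact norm_nonneg _
  set r : ℝ := e1 + aA * k with hrdef
  have hr0 : 0 ≤ r := by rw [hrdef]; exact add_nonneg he10 (mul_nonneg haA0 hk0)
  set d : ℝ := 2 * (k + g * r * e1) with hddef
  have hd0 : 0 ≤ d := by rw [hddef]; exact mul_nonneg (by norm_num) (add_nonneg hk0 (mul_nonneg (mul_nonneg hg0 hr0) he10))
  set Kc : ℝ := (e1 + d * aA) * (g * r) with hKcdef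
  set Ktot : ℝ := ‖cmx C‖ * Kc * ‖cmx B‖ with hKtotdef
  set W : ℝ := 2 * g * r * (aA + 1) + 1 with hWdef
  clear_value aA k e1 g r d Kc Ktot W
  have main : ∀ ω : ℝ, W ≤ |ω| →
      ‖Tf E A0 A B C τ ω - Taf U V A0 A B C τ ω‖ ≤ Ktot / |ω| := by
    intro ω hω
    rw [hWdef] at hω
    have hW1 : (1:ℝ) ≤ 2 * g * r * (aA + 1) + 1 := by
      nlinarith [mul_nonneg (mul_nonneg hg0 hr0) haA0, mul_nonneg hg0 hr0]
    have hω1 : 1 ≤ |ω| := le_trans hW1 hω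
    have hωpos : 0 < |ω| := lt_of_lt_of_le one_pos hω1
    have hωne : ω ≠ 0 := by
      intro h; rw [h] at hω1; simp at hω1; linarith
    set lam : ℂ := Complex.I * (ω:ℂ) with hlamdef
    have hlam : lam ≠ 0 := by
      rw [hlamdef]
      exact mul_ne_zero Complex.I_ne_zero (by exact_mod_cast hωne)
    set Ac := TsubTaAux.Acx A0 A τ ω with hAcdef
    set Dm := charM E A0 A τ lam with hDmdef
    set Mm := M0tau U V A0 A τ ω with hMmdef
    have hDu : IsUnit Dm := hD ω
    have hMu : IsUnit Mm := (hM ω).1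
    have hMinv : ‖Mm⁻¹‖ ≤ c := (hM ω).2
    have hEVc : cmx E * cmx V = 0 := by
      rw [← TsubTaAux.cmx_mul, hEV, TsubTaAux.cmx_zero]
    have hMeq : Mm = (cmx U)ᵀ * Ac * cmx V := TsubTaAux.M0tau_eq U V A0 A τ ω
    set R' : Matrix (Fin n) (Fin n) ℂ := 1 - Ac * cmx V * Mm⁻¹ * (cmx U)ᵀ with hR'def
    have hkey : Dm⁻¹ + cmx V * Mm⁻¹ * (cmx U)ᵀ =
        lam⁻¹ • ((1 + Dm⁻¹ * Ac) * (G * R')) := by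
      rw [hR'def, hMeq]
      exact TsubTaAux.key_identity Dm Ac (cmx E) G (cmx V) ((cmx U)ᵀ) lam hlam
        (TsubTaAux.charM_eq E A0 A τ ω) hDu (hMeq ▸ hMu) hEVc hG
    -- norm bounds
    have hAcn : ‖Ac‖ ≤ aA := haA ω
    have hRn : ‖R'‖ ≤ r := by
      rw [hR'def, hrdef]
      refine (norm_sub_le _ _).trans (add_le_add he1def.ge ?_)
      calc ‖Ac * cmx V * Mm⁻¹ * (cmx U)ᵀ‖
          ≤ ‖Ac * cmx V * Mm⁻¹‖ * ‖(cmx U)ᵀ‖ := Matrix.l2_opNorm_mul _ _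
        _ ≤ (‖Ac * cmx V‖ * ‖Mm⁻¹‖) * ‖(cmx U)ᵀ‖ :=
            mul_le_mul_of_nonneg_right (Matrix.l2_opNorm_mul _ _) (norm_nonneg _)
        _ ≤ ((‖Ac‖ * ‖cmx V‖) * ‖Mm⁻¹‖) * ‖(cmx U)ᵀ‖ :=
            mul_le_mul_of_nonneg_right (mul_le_mul_of_nonneg_right
              (Matrix.l2_opNorm_mul _ _) (norm_nonneg _)) (norm_nonneg _)
        _ ≤ ((aA * ‖cmx V‖) * c) * ‖(cmx U)ᵀ‖ := by
            refine mul_le_mul_of_nonneg_right ?_ (norm_nonneg _)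
            exact mul_le_mul (mul_le_mul_of_nonneg_right hAcn (norm_nonneg _)) hMinv
              (norm_nonneg _) (mul_nonneg haA0 (norm_nonneg _))
        _ = aA * k := by rw [hkdef]; ring
    have hGRn : ‖G * R'‖ ≤ g * r := by
      rw [hgdef]
      exact (Matrix.l2_opNorm_mul _ _).trans (mul_le_mul_of_nonneg_left hRn (norm_nonneg _))
    have hlamn : ‖lam⁻¹‖ = |ω|⁻¹ := by
      rw [hlamdef, norm_inv]
      congr 1
      rw [norm_mul, Complex.norm_I, one_mul]; simp
    have hkn : ‖cmx V * Mm⁻¹ * (cmx U)ᵀ‖ ≤ k := by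
      rw [hkdef]
      calc ‖cmx V * Mm⁻¹ * (cmx U)ᵀ‖
          ≤ ‖cmx V * Mm⁻¹‖ * ‖(cmx U)ᵀ‖ := Matrix.l2_opNorm_mul _ _
        _ ≤ (‖cmx V‖ * ‖Mm⁻¹‖) * ‖(cmx U)ᵀ‖ :=
            mul_le_mul_of_nonneg_right (Matrix.l2_opNorm_mul _ _) (norm_nonneg _)
        _ ≤ (‖cmx V‖ * c) * ‖(cmx U)ᵀ‖ :=
            mul_le_mul_of_nonneg_right
              (mul_le_mul_of_nonneg_left hMinv (norm_nonneg _)) (norm_nonneg _)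
    have honepl : ∀ X : Matrix (Fin n) (Fin n) ℂ, ‖(1:Matrix (Fin n) (Fin n) ℂ) + X‖ ≤ e1 + ‖X‖ :=
      fun X => (norm_add_le _ _).trans (add_le_add he1def.ge le_rfl)
    -- bound for ‖Dm⁻¹‖
    have hDinvEq : Dm⁻¹ = lam⁻¹ • ((1 + Dm⁻¹ * Ac) * (G * R')) - cmx V * Mm⁻¹ * (cmx U)ᵀ :=
      eq_sub_of_add_eq hkey
    set x : ℝ := ‖Dm⁻¹‖ with hxdef
    clear_value x
    have hx0 : 0 ≤ x := by rw [hxdef]; exact norm_nonneg _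
    have hxineq' : ‖Dm⁻¹‖ ≤ |ω|⁻¹ * ((e1 + ‖Dm⁻¹‖ * aA) * (g * r)) + k := by
      nth_rewrite 1 [hDinvEq]
      refine (norm_sub_le _ _).trans (add_le_add ?_ hkn)
      rw [norm_smul, hlamn]
      refine mul_le_mul_of_nonneg_left ?_ (inv_nonneg.mpr hωpos.le)
      refine (Matrix.l2_opNorm_mul _ _).trans ?_
      refine mul_le_mul ?_ hGRn (norm_nonneg _)
        (add_nonneg he10 (mul_nonneg (norm_nonneg _) haA0))
      refine (honepl _).trans (add_le_add le_rfl ?_)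
      exact (Matrix.l2_opNorm_mul _ _).trans (mul_le_mul_of_nonneg_left hAcn (norm_nonneg _))
    have hxineq : x ≤ |ω|⁻¹ * ((e1 + x * aA) * (g * r)) + k := by
      rw [hxdef]; exact hxineq'
    have hxW : x ≤ d := by
      have s0 : (0:ℝ) ≤ g * r := mul_nonneg hg0 hr0
      have key2 : |ω| * x ≤ (e1 + x * aA) * (g * r) + k * |ω| := by
        calc |ω| * x ≤ |ω| * (|ω|⁻¹ * ((e1 + x * aA) * (g * r)) + k) :=
              mul_le_mul_of_nonneg_left hxineq hωpos.le
          _ = (e1 + x * aA) * (g * r) + k * |ω| := by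
              rw [mul_add, ← mul_assoc, mul_inv_cancel₀ hωpos.ne', one_mul]; ring
      have h1 : aA * (g * r) ≤ |ω| / 2 := by nlinarith [hω, s0]
      have h2 : x * (aA * (g * r)) ≤ x * (|ω| / 2) := mul_le_mul_of_nonneg_left h1 hx0
      have h6 : e1 * (g * r) ≤ e1 * (g * r) * |ω| := by
        nlinarith [mul_le_mul_of_nonneg_left hω1 (mul_nonneg he10 s0)]
      have h5 : x * |ω| ≤ (2 * (k + g * r * e1)) * |ω| := by nlinarith [key2, h2, h6]
      have h7 := le_of_mul_le_mul_right h5 hωpos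
      rw [hddef]
      linarith [h7]
    -- bound for the sum
    have hPn : ‖Dm⁻¹ + cmx V * Mm⁻¹ * (cmx U)ᵀ‖ ≤ Kc / |ω| := by
      rw [hkey, norm_smul, hlamn]
      rw [div_eq_inv_mul]
      refine mul_le_mul_of_nonneg_left ?_ (inv_nonneg.mpr hωpos.le)
      rw [hKcdef]
      refine (Matrix.l2_opNorm_mul _ _).trans ?_
      refine mul_le_mul ?_ hGRn (norm_nonneg _) (add_nonneg he10 (mul_nonneg hd0 haA0))
      refine (honepl _).trans (add_le_add le_rfl ?_)
      calc ‖Dm⁻¹ * Ac‖ ≤ ‖Dm⁻¹‖ * ‖Ac‖ := Matrix.l2_opNorm_mul _ _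
        _ ≤ d * aA := by
            rw [← hxdef]
            exact mul_le_mul hxW hAcn (by rw [← hxdef] at *; positivity) hd0
    -- rewrite Tf - Taf
    have hTT : Tf E A0 A B C τ ω - Taf U V A0 A B C τ ω =
        cmx C * ((Dm⁻¹ + cmx V * Mm⁻¹ * (cmx U)ᵀ) * cmx B) := by
      rw [Tf, Taf, ← hDmdef, ← hMmdef]
      exact TsubTaAux.restructure (cmx C) (cmx B) (Dm⁻¹) (cmx V) (Mm⁻¹) ((cmx U)ᵀ)
    rw [hTT, hKtotdef]
    calc ‖cmx C * ((Dm⁻¹ + cmx V * Mm⁻¹ * (cmx U)ᵀ) * cmx B)‖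
        ≤ ‖cmx C‖ * ‖(Dm⁻¹ + cmx V * Mm⁻¹ * (cmx U)ᵀ) * cmx B‖ := Matrix.l2_opNorm_mul _ _
      _ ≤ ‖cmx C‖ * (‖Dm⁻¹ + cmx V * Mm⁻¹ * (cmx U)ᵀ‖ * ‖cmx B‖) :=
          mul_le_mul_of_nonneg_left (Matrix.l2_opNorm_mul _ _) (norm_nonneg _)
      _ ≤ ‖cmx C‖ * ((Kc / |ω|) * ‖cmx B‖) :=
          mul_le_mul_of_nonneg_left
            (mul_le_mul_of_nonneg_right hPn (norm_nonneg _)) (norm_nonneg _)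
      _ = ‖cmx C‖ * Kc * ‖cmx B‖ / |ω| := by ring
  -- conclude
  have habs : Tendsto (fun ω : ℝ => |ω|) (cocompact ℝ) atTop := by
    exact (tendsto_norm_cocompact_atTop (E := ℝ)).congr fun x => Real.norm_eq_abs x
  have hlim : Tendsto (fun ω : ℝ => Ktot / |ω|) (cocompact ℝ) (𝓝 0) :=
    habs.const_div_atTop Ktot
  refine tendsto_of_tendsto_of_tendsto_of_le_of_le' tendsto_const_nhds hlim ?_ ?_
  · exact Eventually.of_forall fun ω => norm_nonneg _
  · filter_upwards [habs.eventually (eventually_ge_atTop W)] with ω hω using main ω hω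
end
end

section
/- If U, V ∈ ℝ^{n×v} have full column rank with U^T E = 0 and E V = 0 where rank(E) = n - v, and U^T A_0 V is nonsingular, and if there exists c > 0 with σ_min(U^T A_0 V + Σ_{i=1}^m U^T A_i V z_i) ≥ c for all (z_1,...,z_m) on the unit torus, then the asymptotic transfer function T_a(jω) is well-defined and uniformly bounded: ‖T_a(jω)‖ ≤ ‖CV‖ ‖U^T B‖ / c for all ω ∈ ℝ. -/
open scoped Matrix.Norms.L2Operator ENNReal NNReal
open Matrix Filter Topology Set

noncomputable section

variable {n m p q v a b : ℕ}

private lemma enorm_eq {a : ℕ} (x : EuclideanSpace ℂ (Fin a)) :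
    ‖x‖ = Real.sqrt (∑ i, Complex.normSq (x i)) := by
  rw [EuclideanSpace.norm_eq]
  simp_rw [Complex.sq_norm]

private lemma l2_opNorm_le_of {a b : ℕ} (A : Matrix (Fin a) (Fin b) ℂ) {r : ℝ} (hr : 0 ≤ r)
    (h : ∀ x : Fin b → ℂ, Real.sqrt (∑ i, Complex.normSq ((A *ᵥ x) i)) ≤
      r * Real.sqrt (∑ i, Complex.normSq (x i))) : ‖A‖ ≤ r := by
  rw [Matrix.l2_opNorm_def]
  refine ContinuousLinearMap.opNorm_le_bound _ hr fun x => ?_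
  simp only [LinearEquiv.trans_apply]
  rw [enorm_eq, enorm_eq]
  exact h x

theorem Ta_uniformly_bounded_of_sigma_min_bound {n m p q v : ℕ}
    (E A0 : Matrix (Fin n) (Fin n) ℝ) (A : Fin m → Matrix (Fin n) (Fin n) ℝ)
    (B : Matrix (Fin n) (Fin p) ℝ) (C : Matrix (Fin q) (Fin n) ℝ)
    (U V : Matrix (Fin n) (Fin v) ℝ) (τ : Fin m → ℝ)
    (hrank : E.rank = n - v) (hUrank : U.rank = v) (hVrank : V.rank = v)
    (hUE : Uᵀ * E = 0) (hEV : E * V = 0)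
    (hA0 : IsUnit (Uᵀ * A0 * V))
    (c : ℝ) (hc : 0 < c)
    (hσmin : ∀ z : Fin m → ℂ, (∀ i, ‖z i‖ = 1) →
      ∀ x : Fin v → ℂ,
        c * Real.sqrt (∑ i, Complex.normSq (x i)) ≤
          Real.sqrt (∑ i, Complex.normSq
            ((((cmx U)ᵀ * cmx A0 * cmx V +
              ∑ j, z j • ((cmx U)ᵀ * cmx (A j) * cmx V)) *ᵥ x) i))) :
    ∀ ω : ℝ, IsUnit (M0tau U V A0 A τ ω) ∧
      ‖Taf U V A0 A B C τ ω‖ ≤ ‖cmx C * cmx V‖ * ‖(cmx U)ᵀ * cmx B‖ / c := by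
  intro ω
  set z : Fin m → ℂ := fun i => Complex.exp (-(Complex.I * (ω : ℂ) * (τ i : ℂ))) with hzdef
  have hz1 : ∀ i, ‖z i‖ = 1 := by
    intro i
    simp [hzdef, Complex.norm_exp]
  set M := M0tau U V A0 A τ ω with hMdef
  have hMeq : M = (cmx U)ᵀ * cmx A0 * cmx V + ∑ j, z j • ((cmx U)ᵀ * cmx (A j) * cmx V) := rfl
  have key : ∀ x : Fin v → ℂ, c * Real.sqrt (∑ i, Complex.normSq (x i)) ≤
      Real.sqrt (∑ i, Complex.normSq ((M *ᵥ x) i)) := by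
    intro x
    have := hσmin z hz1 x
    rwa [← hMeq] at this
  have hinj : Function.Injective M.mulVec := by
    intro x y hxy
    have h0 : M *ᵥ (x - y) = 0 := by
      rw [Matrix.mulVec_sub, hxy, sub_self]
    have hk := key (x - y)
    rw [h0] at hk
    simp only [Pi.zero_apply, Complex.normSq_zero, Finset.sum_const_zero, Real.sqrt_zero] at hk
    have hnn : (0 : ℝ) ≤ ∑ i, Complex.normSq ((x - y) i) :=
      Finset.sum_nonneg fun i _ => Complex.normSq_nonneg _
    have hs : Real.sqrt (∑ i, Complex.normSq ((x - y) i)) = 0 := by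
      nlinarith [Real.sqrt_nonneg (∑ i, Complex.normSq ((x - y) i))]
    have hsum : (∑ i, Complex.normSq ((x - y) i)) = 0 :=
      le_antisymm (Real.sqrt_eq_zero'.mp hs) hnn
    have hzero : ∀ i ∈ Finset.univ, Complex.normSq ((x - y) i) = 0 :=
      (Finset.sum_eq_zero_iff_of_nonneg fun i _ => Complex.normSq_nonneg _).mp hsum
    funext i
    have h2 : x i - y i = 0 := Complex.normSq_eq_zero.mp (hzero i (Finset.mem_univ i))
    exact sub_eq_zero.mp h2
  have hM : IsUnit M := Matrix.mulVec_injective_iff_isUnit.mp hinj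
  have hMdet : IsUnit M.det := (Matrix.isUnit_iff_isUnit_det M).mp hM
  have hMMinv : M * M⁻¹ = 1 := Matrix.mul_nonsing_inv M hMdet
  have hMinv : ‖M⁻¹‖ ≤ 1 / c := by
    refine l2_opNorm_le_of _ (le_of_lt (by positivity)) fun u => ?_
    have hk := key (M⁻¹ *ᵥ u)
    rw [Matrix.mulVec_mulVec, hMMinv, Matrix.one_mulVec] at hk
    rw [one_div, ← div_eq_inv_mul, le_div_iff₀ hc]
    linarith
  refine ⟨hM, ?_⟩
  have hTa : Taf U V A0 A B C τ ω =
      -(cmx C * cmx V * M⁻¹ * ((cmx U)ᵀ * cmx B)) := rfl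
  rw [hTa, norm_neg]
  calc ‖cmx C * cmx V * M⁻¹ * ((cmx U)ᵀ * cmx B)‖
      ≤ ‖cmx C * cmx V * M⁻¹‖ * ‖(cmx U)ᵀ * cmx B‖ := Matrix.l2_opNorm_mul _ _
    _ ≤ ‖cmx C * cmx V‖ * ‖M⁻¹‖ * ‖(cmx U)ᵀ * cmx B‖ := by
        have := Matrix.l2_opNorm_mul (cmx C * cmx V) (M⁻¹)
        exact mul_le_mul_of_nonneg_right this (norm_nonneg _)
    _ ≤ ‖cmx C * cmx V‖ * (1 / c) * ‖(cmx U)ᵀ * cmx B‖ := by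
        have h1 : ‖cmx C * cmx V‖ * ‖M⁻¹‖ ≤ ‖cmx C * cmx V‖ * (1 / c) :=
          mul_le_mul_of_nonneg_left hMinv (norm_nonneg _)
        exact mul_le_mul_of_nonneg_right h1 (norm_nonneg _)
    _ = ‖cmx C * cmx V‖ * ‖(cmx U)ᵀ * cmx B‖ / c := by ring
end
end
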